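/- arXiv:math/9610218 — 6 statements merged into one kernel-verified Lean document; each statement's English description precedes it below -/
import Mathlib

section
/- Let G be a noncyclic abelian p-group with p an odd prime, and let U be a subgroup of G of order p. Then there exists a subgroup V of G of order p^2 containing U such that V is isomorphic to C_p × C_p. -/
open Subgroup

/-- An abelian `p`-group whose `p`-torsion subgroup has at most `p` elements is cyclic. -/
private lemma key_cyclic {p : ℕ} (hp : p.Prime) :
    ∀ n : ℕ, ∀ (G : Type*) (_ : CommGroup G) (_ : Finite G), Nat.card G = n →
      IsPGroup p G → Nat.card ((powMonoidHom p : G →* G).ker) ≤ p → IsCyclic G := by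
  intro n
  induction n using Nat.strong_induction_on with
  | _ n IH =>
  intro G _ _ hcard hG hker
  haveI : Fact p.Prime := ⟨hp⟩
  set f : G →* G := powMonoidHom p with hf
  rcases eq_or_ne (Nat.card G) 1 with h1 | h1
  · haveI : Subsingleton G := Nat.card_eq_one_iff_unique.mp h1 |>.1
    infer_instance
  -- G is nontrivial
  have hpdvd : p ∣ Nat.card G := by
    obtain ⟨m, hm⟩ := hG.exists_card_eq
    rcases Nat.eq_zero_or_pos m with hm0 | hm0
    · exact absurd (by simp [hm0] at hm; exact hm) h1
    · exact hm ▸ dvd_pow_self p hm0.ne'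
  haveI : Fintype G := Fintype.ofFinite G
  obtain ⟨g, hg⟩ := exists_prime_orderOf_dvd_card (G := G) p
    (by rwa [Fintype.card_eq_nat_card])
  have hg1 : g ≠ 1 := by
    intro h; rw [h, orderOf_one] at hg; exact hp.one_lt.ne' hg.symm
  have hgker : g ∈ f.ker := by
    simp only [hf, MonoidHom.mem_ker, powMonoidHom_apply]
    rw [← hg]; exact pow_orderOf_eq_one g
  have hker2 : 2 ≤ Nat.card f.ker := by
    rw [Nat.succ_le_iff, Finite.one_lt_card_iff_nontrivial]
    exact ⟨⟨g, hgker⟩, 1, by simp [Subtype.ext_iff, hg1]⟩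
  have hcard_eq : Nat.card G = Nat.card f.range * Nat.card f.ker := by
    rw [card_eq_card_quotient_mul_card_subgroup f.ker]
    congr 1
    exact Nat.card_congr (QuotientGroup.quotientKerEquivRange f).toEquiv
  have hrange_pos : 0 < Nat.card f.range := Nat.card_pos
  have hrange_lt : Nat.card f.range < Nat.card G := by
    rw [hcard_eq]
    calc Nat.card f.range = Nat.card f.range * 1 := (mul_one _).symm
    _ < Nat.card f.range * Nat.card f.ker := by
        have := mul_lt_mul_of_pos_left (show (1:ℕ) < Nat.card f.ker by omega) hrange_pos
        simpa using this
  -- torsion of the range is small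
  have hkerH : Nat.card ((powMonoidHom p : f.range →* f.range).ker) ≤ p := by
    refine le_trans (Nat.card_le_card_of_injective
      (fun x : (powMonoidHom p : f.range →* f.range).ker =>
        (⟨(x.1 : G), by
          have hx := x.2
          simp only [MonoidHom.mem_ker, powMonoidHom_apply] at hx
          simp only [hf, MonoidHom.mem_ker, powMonoidHom_apply]
          exact_mod_cast congrArg (Subtype.val) hx⟩ : f.ker)) ?_) hker
    intro x y hxy
    simp only [Subtype.mk.injEq] at hxy
    exact Subtype.ext (Subtype.ext hxy)
  have hHcyc : IsCyclic f.range :=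
    IH (Nat.card f.range) (hcard ▸ hrange_lt) f.range inferInstance inferInstance rfl (hG.to_subgroup f.range) hkerH
  rcases eq_or_ne (Nat.card f.range) 1 with hH1 | hH1
  · -- then G = ker, so card G ≤ p, hence = p
    have : Nat.card G = p := by
      have hle : Nat.card G ≤ p := by rw [hcard_eq, hH1, one_mul]; exact hker
      exact le_antisymm hle (Nat.le_of_dvd Nat.card_pos hpdvd)
    exact isCyclic_of_prime_card this
  · -- card of kernel is exactly p
    have hkerp : Nat.card f.ker = p := by
      obtain ⟨j, hj⟩ := (hG.to_subgroup f.ker).exists_card_eq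
      rcases Nat.eq_zero_or_pos j with hj0 | hj0
      · rw [hj, hj0, pow_zero] at hker2; omega
      · have : p ^ j ≤ p ^ 1 := by rw [pow_one, ← hj]; exact hker
        have hjle : j ≤ 1 := (Nat.pow_le_pow_iff_right hp.one_lt).mp this
        interval_cases j
        · rw [hj, pow_one]
    obtain ⟨b', hb'⟩ := hHcyc.exists_generator
    have hob' : orderOf b' = Nat.card f.range :=
      orderOf_eq_card_of_forall_mem_zpowers hb'
    have hob : orderOf (b' : G) = Nat.card f.range := by
      rw [← hob']
      exact orderOf_injective f.range.subtype f.range.subtype_injective b'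
    obtain ⟨a, ha⟩ := b'.2
    have hab : a ^ p = (b' : G) := by
      simpa only [hf, powMonoidHom_apply] using ha
    -- p divides the order of a
    have hpdvd_a : p ∣ orderOf a := by
      obtain ⟨k, hk⟩ := hG a
      obtain ⟨i, _, hi⟩ := (Nat.dvd_prime_pow hp).mp (orderOf_dvd_of_pow_eq_one hk)
      rcases Nat.eq_zero_or_pos i with hi0 | hi0
      · exfalso
        have ha1 : a = 1 := by
          have : orderOf a = 1 := by rw [hi, hi0, pow_zero]
          exact orderOf_eq_one_iff.mp this
        rw [ha1, one_pow] at hab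
        rw [← hab, orderOf_one] at hob
        exact hH1 hob.symm
      · exact hi ▸ dvd_pow_self p hi0.ne'
    have hord : orderOf a = p * Nat.card f.range := by
      have := orderOf_pow (n := p) a
      rw [hab, hob, Nat.gcd_comm, Nat.gcd_eq_left hpdvd_a] at this
      obtain ⟨c, hc⟩ := hpdvd_a
      rw [hc, Nat.mul_div_cancel_left c hp.pos] at this
      rw [hc, this]
    refine isCyclic_of_orderOf_eq_card a ?_
    rw [hord, hcard_eq, hkerp, mul_comm]

theorem artin_stmt0 {G : Type*} [CommGroup G] [Finite G] {p : ℕ}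
    (hp : p.Prime) (hodd : p ≠ 2) (hG : IsPGroup p G) (hnc : ¬ IsCyclic G)
    (U : Subgroup G) (hU : Nat.card U = p) :
    ∃ V : Subgroup G, U ≤ V ∧ Nat.card V = p ^ 2 ∧
      Nonempty (V ≃* (Multiplicative (ZMod p) × Multiplicative (ZMod p))) := by
  haveI : Fact p.Prime := ⟨hp⟩
  -- find an element of order p outside U
  obtain ⟨g, hgp, hgU⟩ : ∃ g : G, g ^ p = 1 ∧ g ∉ U := by
    by_contra h
    push_neg at h
    have hker : (powMonoidHom p : G →* G).ker ≤ U := by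
      intro x hx
      exact h x (by simpa [MonoidHom.mem_ker, powMonoidHom_apply] using hx)
    exact hnc (key_cyclic hp (Nat.card G) G inferInstance inferInstance rfl hG
      (le_trans (Subgroup.card_le_of_le hker) hU.le))
  have hg1 : g ≠ 1 := fun h => hgU (h ▸ U.one_mem)
  have hog : orderOf g = p := orderOf_eq_prime hgp hg1
  set K : Subgroup G := zpowers g with hKdef
  have hK : Nat.card K = p := by rw [hKdef, Nat.card_zpowers, hog]
  have hdisj : U ⊓ K = ⊥ := by
    rw [eq_bot_iff]
    intro x ⟨hxU, hxK⟩
    by_contra hx1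
    rw [Subgroup.mem_bot] at hx1
    have hox : orderOf x = p := by
      have : orderOf x ∣ p := hog ▸ orderOf_dvd_of_mem_zpowers hxK
      exact ((Nat.dvd_prime hp).mp this).resolve_left (fun h =>
        hx1 (orderOf_eq_one_iff.mp h))
    have hzx : zpowers x ≤ K := (zpowers_le (G := G)).mpr hxK
    have : zpowers x = K := Subgroup.eq_of_le_of_card_ge hzx
      (by rw [hK, Nat.card_zpowers, hox])
    have hgx : g ∈ zpowers x := this ▸ mem_zpowers g
    exact hgU ((zpowers_le (G := G)).mpr hxU hgx)
  -- internal direct product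
  set φ : (U × K) →* G := (U.subtype).coprod K.subtype with hφ
  have hinj : Function.Injective φ := by
    rw [injective_iff_map_eq_one]
    rintro ⟨u, k⟩ h
    simp only [hφ, MonoidHom.coprod_apply, Subgroup.coe_subtype] at h
    have hu : (u : G) ∈ U ⊓ K := by
      refine ⟨u.2, ?_⟩
      have : (u : G) = (k : G)⁻¹ := eq_inv_of_mul_eq_one_left h
      rw [this]
      exact K.inv_mem k.2
    rw [hdisj, Subgroup.mem_bot] at hu
    have hk : (k : G) = 1 := by rw [hu, one_mul] at h; exact h
    exact Prod.ext (Subtype.ext hu) (Subtype.ext hk)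
  set e : (U × K) ≃* φ.range := MonoidHom.ofInjective hinj with he
  refine ⟨φ.range, ?_, ?_, ?_⟩
  · intro u hu
    exact ⟨(⟨u, hu⟩, 1), by simp [hφ]⟩
  · have : Nat.card φ.range = Nat.card (U × K) := (Nat.card_congr e.toEquiv).symm
    rw [this, Nat.card_prod, hU, hK, sq]
  · haveI : IsCyclic U := isCyclic_of_prime_card hU
    haveI : IsCyclic K := isCyclic_of_prime_card hK
    have hm : Nat.card (Multiplicative (ZMod p)) = p := by
      rw [Nat.card_congr Multiplicative.toAdd, Nat.card_zmod]
    exact ⟨e.symm.trans (MulEquiv.prodCongr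
      (mulEquivOfCyclicCardEq (by rw [hU, hm]))
      (mulEquivOfCyclicCardEq (by rw [hK, hm])))⟩
end

section
/- Let G be a finite p-group, U a cyclic normal subgroup of G, and H a subgroup containing U. Let C(H) be the set of cyclic subgroups V of H with U ≤ V and (V : U) = p, and C'(H) the subset of those V ∈ C(H) that are normal in H. Then |C(H)| ≡ |C'(H)| (mod p). -/
/-!
`H` is a `p`-group acting on the finite set `C(H)` by conjugation: conjugates of a cyclic
`V ≥ U` are cyclic, and since `U` is normal they still contain `U` with the same index. The
fixed points of this action are the `V` normalized by `H`, i.e. `C'(H)`, and a `p`-group acting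
on a finite set fixes as many points as the set has elements, modulo `p`.
-/

open Pointwise MulAction ConjAct

theorem IsPGroup.card_modEq_card_inter_fixedPoints {p : ℕ} [Fact p.Prime] {P α : Type*}
    [Group P] [MulAction P α] [Finite α] (hP : IsPGroup p P) {S : Set α}
    (hS : ∀ (a : P), ∀ x ∈ S, a • x ∈ S) :
    Nat.card S ≡ Nat.card ↥(S ∩ fixedPoints P α) [MOD p] := by
  let T : SubMulAction P α := ⟨S, fun a {x} => hS a x⟩
  calc Nat.card S = Nat.card T := rfl
    _ ≡ Nat.card (fixedPoints P T) [MOD p] := hP.card_modEq_card_fixedPoints T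
    _ = Nat.card ↥(S ∩ fixedPoints P α) := by
      refine Nat.card_congr ((Equiv.subtypeEquivRight fun x => ?_).trans
        (Equiv.subtypeSubtypeEquivSubtypeInter (· ∈ S) (· ∈ fixedPoints P α)))
      simp [Subtype.ext_iff]

namespace Subgroup

variable {G : Type*} [Group G]

abbrev conjMulAction (H : Subgroup G) : MulAction H (Subgroup G) :=
  MulAction.compHom _ ((toConjAct : G ≃* ConjAct G).toMonoidHom.comp H.subtype)

attribute [local instance] conjMulAction

theorem mem_fixedPoints_conjMulAction_iff {H V : Subgroup G} :
    V ∈ fixedPoints H (Subgroup G) ↔ H ≤ normalizer V :=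
  ⟨fun hV h hh => conjAct_pointwise_smul_iff.mp (hV ⟨h, hh⟩),
    fun hH h => conjAct_pointwise_smul_eq_self (hH h.2)⟩

theorem isCyclic_pointwise_smul_iff {α : Type*} [Group α] [MulDistribMulAction α G] (a : α)
    (V : Subgroup G) : IsCyclic ↥(a • V) ↔ IsCyclic V :=
  (equivSMul a V).isCyclic.symm

theorem conjAct_pointwise_smul_le_of_mem {H V : Subgroup G} {h : G} (hh : h ∈ H) (hV : V ≤ H) :
    toConjAct h • V ≤ H :=
  conjAct_pointwise_smul_eq_self (H.le_normalizer hh) ▸ pointwise_smul_le_pointwise_smul_iff.mpr hV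

theorem Normal.le_pointwise_smul_of_le {U V : Subgroup G} (hU : U.Normal) (a : ConjAct G)
    (hUV : U ≤ V) : U ≤ a • V :=
  hU.conjAct a ▸ pointwise_smul_le_pointwise_smul_iff.mpr hUV

theorem Normal.relIndex_pointwise_smul {U : Subgroup G} (hU : U.Normal) (a : ConjAct G)
    (V : Subgroup G) : U.relIndex (a • V) = U.relIndex V := by
  rw [← Subgroup.relIndex_pointwise_smul a U V, hU.conjAct]

end Subgroup

theorem artin_stmt2_general {G : Type*} [Group G] [Finite G] {p : ℕ}
    (hp : p.Prime) (hG : IsPGroup p G) (U H : Subgroup G) [U.Normal] :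
    Nat.card {V : Subgroup G | V ≤ H ∧ IsCyclic ↥V ∧ U ≤ V ∧ U.relIndex V = p} ≡
      Nat.card {V : Subgroup G | V ≤ H ∧ IsCyclic ↥V ∧ U ≤ V ∧ U.relIndex V = p ∧
        (V.subgroupOf H).Normal} [MOD p] := by
  have : Fact p.Prime := ⟨hp⟩
  have : Finite (Subgroup G) := Finite.of_injective _ SetLike.coe_injective
  let := H.conjMulAction
  have hU : U.Normal := inferInstance
  convert (hG.to_subgroup H).card_modEq_card_inter_fixedPoints
    (S := {V : Subgroup G | V ≤ H ∧ IsCyclic ↥V ∧ U ≤ V ∧ U.relIndex V = p}) ?_ using 3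
  · ext V
    simp only [Set.mem_ofPred_eq, Set.mem_inter_iff, Subgroup.mem_fixedPoints_conjMulAction_iff]
    grind [Subgroup.normal_subgroupOf_iff_le_normalizer]
  · rintro ⟨h, hh⟩ V ⟨hVH, hVc, hUV, hrel⟩
    exact ⟨Subgroup.conjAct_pointwise_smul_le_of_mem hh hVH,
      (Subgroup.isCyclic_pointwise_smul_iff _ V).mpr hVc, hU.le_pointwise_smul_of_le _ hUV,
      (hU.relIndex_pointwise_smul _ V).trans hrel⟩

theorem artin_stmt2 {G : Type*} [Group G] [Finite G] {p : ℕ}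
    (hp : p.Prime) (hG : IsPGroup p G) (U H : Subgroup G) [U.Normal]
    (hUc : IsCyclic U) (hUH : U ≤ H) :
    Nat.card {V : Subgroup G | V ≤ H ∧ IsCyclic ↥V ∧ U ≤ V ∧ U.relIndex V = p} ≡
      Nat.card {V : Subgroup G | V ≤ H ∧ IsCyclic ↥V ∧ U ≤ V ∧ U.relIndex V = p ∧
        (V.subgroupOf H).Normal} [MOD p] :=
  artin_stmt2_general hp hG U H
end

section
/- Let G be a finite p-group with U a cyclic normal subgroup of G contained in H ≤ G, and set H' = { h ∈ H | [h,H] ⊆ U }. Then a subgroup V ∈ C(H) (i.e., V cyclic with U ≤ V and (V:U) = p) is normal in H if and only if V ≤ H'; hence C'(H) = C(H'). -/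
/-!
Write `V = ⟨g⟩`; as `(V : U) = p`, we have `g ^ p ∈ U` and `p ∣ orderOf g`. If `k ∈ H` normalizes
`V`, then `k g k⁻¹ = g ^ r`, and iterating gives `g ^ (r ^ p ^ n) = g` for `k ^ p ^ n = 1`. Hence
`r ^ p ^ n ≡ 1 (mod p)`, so `r ≡ 1 (mod p)` by Fermat, i.e. `k` acts trivially on `V / U`:
all commutators `⁅v, k⁆` lie in `U`. Conversely, commutators in `U ≤ V` make `V` normal in `H`.
-/

open scoped commutatorElement

open Subgroup

theorem Int.prime_dvd_sub_one_of_dvd_pow_prime_pow_sub_one {p : ℕ} [Fact p.Prime] {r : ℤ}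
    (n : ℕ) (h : (p : ℤ) ∣ r ^ p ^ n - 1) : (p : ℤ) ∣ r - 1 := by
  rw [← ZMod.intCast_zmod_eq_zero_iff_dvd] at h ⊢
  push_cast at h ⊢
  rwa [ZMod.pow_card_pow] at h

section

variable {G : Type*} [Group G]

theorem conj_pow_eq_zpow_pow_of_conj_eq_zpow {g k : G} {r : ℤ} (hk : k * g * k⁻¹ = g ^ r)
    (m : ℕ) : k ^ m * g * (k ^ m)⁻¹ = g ^ r ^ m := by
  induction m with
  | zero => simp
  | succ m ih =>
    calc k ^ (m + 1) * g * (k ^ (m + 1))⁻¹ = k * (k ^ m * g * (k ^ m)⁻¹) * k⁻¹ := by group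
      _ = (k * g * k⁻¹) ^ r ^ m := by rw [ih, conj_zpow]
      _ = g ^ r ^ (m + 1) := by rw [hk, ← zpow_mul, pow_succ']

theorem zpow_sub_one_mem_of_conj_eq_zpow {p : ℕ} [Fact p.Prime] {U : Subgroup G} {g k : G}
    {r : ℤ} {n : ℕ} (hpg : p ∣ orderOf g) (hgp : g ^ p ∈ U) (hkn : k ^ p ^ n = 1)
    (hk : k * g * k⁻¹ = g ^ r) : g ^ (r - 1) ∈ U := by
  have hfix : g ^ r ^ p ^ n = g := by
    simpa [hkn] using (conj_pow_eq_zpow_pow_of_conj_eq_zpow hk (p ^ n)).symm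
  have hord : (orderOf g : ℤ) ∣ r ^ p ^ n - 1 := by
    rw [orderOf_dvd_iff_zpow_eq_one, zpow_sub, hfix, zpow_one, mul_inv_cancel]
  obtain ⟨t, ht⟩ := Int.prime_dvd_sub_one_of_dvd_pow_prime_pow_sub_one n
    ((Int.natCast_dvd_natCast.mpr hpg).trans hord)
  rw [ht, zpow_mul, zpow_natCast]
  exact U.zpow_mem hgp t

theorem commutator_zpow_mem_of_conj_eq_zpow {U : Subgroup G} {g k : G} {r : ℤ}
    (hk : k * g * k⁻¹ = g ^ r) (hU : g ^ (r - 1) ∈ U) (a : ℤ) : ⁅g ^ a, k⁆ ∈ U := by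
  have hconj : k * g ^ a * k⁻¹ = g ^ (r * a) := by rw [← conj_zpow, hk, zpow_mul]
  have hcomm : ⁅g ^ a, k⁆ = (g ^ (r - 1)) ^ (-a) := by
    calc ⁅g ^ a, k⁆ = g ^ a * (k * g ^ a * k⁻¹)⁻¹ := by rw [commutatorElement_def]; group
      _ = g ^ (a - r * a) := by rw [hconj, ← zpow_neg, ← zpow_add, sub_eq_add_neg]
      _ = (g ^ (r - 1)) ^ (-a) := by rw [← zpow_mul]; ring_nf
  rw [hcomm]
  exact U.zpow_mem hU (-a)

theorem commutator_mem_of_conj_mem_zpowers {p : ℕ} [Fact p.Prime] {U : Subgroup G} [U.Normal]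
    {g k : G} {n : ℕ} (hrel : U.relIndex (zpowers g) = p) (hkn : k ^ p ^ n = 1)
    (hconj : k * g * k⁻¹ ∈ zpowers g) : ∀ v ∈ zpowers g, ⁅v, k⁆ ∈ U := by
  obtain ⟨r, hr⟩ := mem_zpowers_iff.mp hconj
  have hpg : p ∣ orderOf g := by
    simpa [hrel, Nat.card_zpowers] using U.relIndex_dvd_card (zpowers g)
  have hgp : g ^ p ∈ U := hrel ▸ U.pow_relIndex_mem (mem_zpowers g)
  rintro _ ⟨a, rfl⟩
  exact commutator_zpow_mem_of_conj_eq_zpow hr.symm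
    (zpow_sub_one_mem_of_conj_eq_zpow hpg hgp hkn hr.symm) a

theorem conj_mem_of_commutator_mem {V : Subgroup G} {v k : G} (hv : v ∈ V) (hvk : ⁅v, k⁆ ∈ V) :
    k * v * k⁻¹ ∈ V := by
  have h : k * v * k⁻¹ = ⁅v, k⁆⁻¹ * v := by rw [commutatorElement_def]; group
  rw [h]
  exact mul_mem (inv_mem hvk) hv

theorem zpowers_subgroupOf_normal_iff_le {p : ℕ} [Fact p.Prime] (hG : IsPGroup p G)
    {U H H' : Subgroup G} [U.Normal] (hH' : ∀ g : G, g ∈ H' ↔ g ∈ H ∧ ∀ k ∈ H, ⁅g, k⁆ ∈ U)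
    {g : G} (hgH : zpowers g ≤ H) (hUg : U ≤ zpowers g) (hrel : U.relIndex (zpowers g) = p) :
    ((zpowers g).subgroupOf H).Normal ↔ zpowers g ≤ H' := by
  rw [normal_subgroupOf_iff hgH]
  constructor
  · intro hN v hv
    refine (hH' v).mpr ⟨hgH hv, fun k hk => ?_⟩
    obtain ⟨n, hn⟩ := hG k
    exact commutator_mem_of_conj_mem_zpowers hrel hn (hN g k (mem_zpowers g) hk) v hv
  · intro hgH' v k hv hk
    exact conj_mem_of_commutator_mem hv (hUg (((hH' v).mp (hgH' hv)).2 k hk))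

end

theorem artin_stmt4_general {G : Type*} [Group G] {p : ℕ}
    (hp : p.Prime) (hG : IsPGroup p G) (U H H' : Subgroup G) [U.Normal]
    (hH' : ∀ g : G, g ∈ H' ↔ g ∈ H ∧ ∀ k ∈ H, ⁅g, k⁆ ∈ U) :
    (∀ V : Subgroup G, V ≤ H → IsCyclic ↥V → U ≤ V → U.relIndex V = p →
      ((V.subgroupOf H).Normal ↔ V ≤ H')) ∧
    {V : Subgroup G | V ≤ H ∧ IsCyclic ↥V ∧ U ≤ V ∧ U.relIndex V = p ∧
        (V.subgroupOf H).Normal} =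
      {V : Subgroup G | V ≤ H' ∧ IsCyclic ↥V ∧ U ≤ V ∧ U.relIndex V = p} := by
  have := Fact.mk hp
  have hC : ∀ V : Subgroup G, V ≤ H → IsCyclic ↥V → U ≤ V → U.relIndex V = p →
      ((V.subgroupOf H).Normal ↔ V ≤ H') := by
    intro V hVH hVc hUV hrel
    obtain ⟨g, rfl⟩ := V.isCyclic_iff_exists_zpowers_eq_top.mp hVc
    exact zpowers_subgroupOf_normal_iff_le hG hH' hVH hUV hrel
  refine ⟨hC, Set.ext fun V => ⟨?_, ?_⟩⟩
  · rintro ⟨hVH, hVc, hUV, hrel, hN⟩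
    exact ⟨(hC V hVH hVc hUV hrel).mp hN, hVc, hUV, hrel⟩
  · rintro ⟨hVH', hVc, hUV, hrel⟩
    have hVH : V ≤ H := hVH'.trans fun g hg => ((hH' g).mp hg).1
    exact ⟨hVH, hVc, hUV, hrel, (hC V hVH hVc hUV hrel).mpr hVH'⟩

theorem artin_stmt4 {G : Type*} [Group G] [Finite G] {p : ℕ}
    (hp : p.Prime) (hG : IsPGroup p G) (U H H' : Subgroup G) [U.Normal]
    (hUc : IsCyclic U) (hUH : U ≤ H)
    (hH' : ∀ g : G, g ∈ H' ↔ g ∈ H ∧ ∀ k ∈ H, ⁅g, k⁆ ∈ U) :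
    (∀ V : Subgroup G, V ≤ H → IsCyclic ↥V → U ≤ V → U.relIndex V = p →
      ((V.subgroupOf H).Normal ↔ V ≤ H')) ∧
    {V : Subgroup G | V ≤ H ∧ IsCyclic ↥V ∧ U ≤ V ∧ U.relIndex V = p ∧
        (V.subgroupOf H).Normal} =
      {V : Subgroup G | V ≤ H' ∧ IsCyclic ↥V ∧ U ≤ V ∧ U.relIndex V = p} :=
  artin_stmt4_general hp hG U H H' hH'
end

section
/- Let G be a finite abelian p-group and U a subgroup of order p. Let C(G) = { V ≤ G | V cyclic, U ≤ V, (V:U) = p }. Then the following are equivalent: (i) |C(G)| = 1; (ii) |C(G)| ≢ 0 (mod p); (iii) G is cyclic. (Assume |G| ≥ p^2.) -/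
/-!
Count `X = {x | x ^ p ∈ U \ {1}}` in two ways. The cyclic subgroup generated by `x` lies in
`C(G)` exactly when `x ∈ X`, and each `V ∈ C(G)` has `φ(p²) = p(p - 1)` generators, so
`|X| = |C(G)| · p(p - 1)`. On the other hand `X` is a union of cosets of the `p`-torsion `G[p]`.
If `G` is cyclic, then `G[p] = U` and `X` is the set of elements of order `p²`, so
`|X| = p² - p` and `|C(G)| = 1`. If `G` is not cyclic, then `|G[p]| ≥ p²`, because
`|G[p^k]| ≤ |G[p]|^k` and a `p`-group with `|G[n]| ≤ n` for all `n` is cyclic; hence `p²`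
divides `|X|` and `p` divides `|C(G)|`.
-/

open Subgroup

theorem Subgroup.card_mul_relIndex {G : Type*} [Group G] {H K : Subgroup G} (h : H ≤ K) :
    Nat.card H * H.relIndex K = Nat.card K := by
  simpa only [relIndex_bot_left] using relIndex_mul_relIndex _ _ _ bot_le h

theorem Subgroup.card_comap_le {G G' : Type*} [Group G] [Group G'] [Finite G'] (f : G →* G')
    (K : Subgroup G') : Nat.card (K.comap f) ≤ Nat.card f.ker * Nat.card K := by
  rw [← card_mul_relIndex (f.ker_le_comap K), relIndex_ker]
  gcongr
  exact card_le_of_le (map_comap_le f K)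

theorem MonoidHom.card_ker_dvd_card_preimage {G G' : Type*} [Group G] [Group G'] (f : G →* G')
    (t : Set G') : Nat.card f.ker ∣ Nat.card (f ⁻¹' t) :=
  Dvd.intro _ (QuotientGroup.card_preimage_mk f.ker (QuotientGroup.kerLift f ⁻¹' t)).symm

theorem Nat.card_eq_card_mul_of_forall_card_fiber {α β : Type*} [Finite α] [Finite β]
    (f : α → β) {m : ℕ} (h : ∀ b, Nat.card (f ⁻¹' {b}) = m) : Nat.card α = Nat.card β * m := by
  have := Fintype.ofFinite β
  rw [← Nat.card_congr (Equiv.sigmaPreimageEquiv f), Nat.card_sigma]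
  simp [h, Nat.card_eq_fintype_card]

theorem Subgroup.card_generators_eq_totient {G : Type*} [Group G] [Finite G] (V : Subgroup G)
    [IsCyclic V] : Nat.card {x : G // zpowers x = V} = (Nat.card V).totient := by
  classical
  have := Fintype.ofFinite G
  have hgen : ∀ x : G, zpowers x = V ↔ x ∈ V ∧ orderOf x = Nat.card V := fun x =>
    ⟨fun h => ⟨h ▸ mem_zpowers x, by rw [← Nat.card_zpowers, h]⟩, fun ⟨hx, hord⟩ =>
      eq_of_le_of_card_ge (zpowers_le.mpr hx) (by rw [Nat.card_zpowers, hord])⟩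
  calc Nat.card {x : G // zpowers x = V}
      = Nat.card {y : V // orderOf y = Nat.card V} := by
        refine Nat.card_congr ((Equiv.subtypeEquivRight hgen).trans ?_)
        refine (Equiv.subtypeSubtypeEquivSubtypeInter (· ∈ V) _).symm.trans ?_
        exact Equiv.subtypeEquivRight fun y => by rw [orderOf_coe]
    _ = (Nat.card V).totient := by
        rw [Nat.card_eq_fintype_card, Fintype.card_subtype, Nat.card_eq_fintype_card]
        exact IsCyclic.card_orderOf_eq_totient dvd_rfl

section CommGroup

variable {G : Type*} [CommGroup G] {p : ℕ}

theorem ker_powMonoidHom_mul (m n : ℕ) :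
    (powMonoidHom (m * n) : G →* G).ker = (powMonoidHom n).ker.comap (powMonoidHom m) := by
  ext x
  simp [pow_mul]

theorem card_ker_powMonoidHom_pow_le [Finite G] (n k : ℕ) :
    Nat.card (powMonoidHom (n ^ k) : G →* G).ker ≤ Nat.card (powMonoidHom n : G →* G).ker ^ k := by
  induction k with
  | zero => simp
  | succ k ih =>
    rw [pow_succ', ker_powMonoidHom_mul, pow_succ']
    exact (card_comap_le _ _).trans (Nat.mul_le_mul_left _ ih)

theorem IsPGroup.isCyclic_of_card_ker_powMonoidHom_le [Finite G] (hp : p.Prime)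
    (hG : IsPGroup p G) (h : Nat.card (powMonoidHom p : G →* G).ker ≤ p) : IsCyclic G := by
  classical
  cases nonempty_fintype G
  have := Fact.mk hp
  refine isCyclic_of_card_pow_eq_one_le fun n hn => ?_
  obtain ⟨m, hm⟩ := IsPGroup.iff_card.mp hG
  obtain ⟨j, -, hj⟩ := (Nat.dvd_prime_pow hp).mp (Nat.gcd_dvd_right n (p ^ m))
  calc Finset.card {a : G | a ^ n = 1} ≤ Finset.card {a : G | a ^ p ^ j = 1} := by
        refine Finset.card_le_card fun a ha => ?_
        simp only [Finset.mem_filter, Finset.mem_univ, true_and] at ha ⊢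
        rw [← hj]
        exact pow_gcd_eq_one.mpr ⟨ha, hm ▸ pow_card_eq_one'⟩
    _ = Nat.card (powMonoidHom (p ^ j) : G →* G).ker := by
        rw [Nat.card_eq_fintype_card, Fintype.card_subtype]
        simp [MonoidHom.mem_ker]
    _ ≤ p ^ j := (card_ker_powMonoidHom_pow_le p j).trans (Nat.pow_le_pow_left h j)
    _ ≤ n := hj ▸ Nat.le_of_dvd hn (Nat.gcd_dvd_left n _)

theorem IsPGroup.sq_dvd_card_ker_powMonoidHom [Finite G] (hp : p.Prime) (hG : IsPGroup p G)
    (hnc : ¬ IsCyclic G) : p ^ 2 ∣ Nat.card (powMonoidHom p : G →* G).ker := by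
  have := Fact.mk hp
  obtain ⟨j, hj⟩ := IsPGroup.iff_card.mp (hG.to_subgroup (powMonoidHom p : G →* G).ker)
  rw [hj]
  refine pow_dvd_pow p (not_lt.mp fun hj2 => hnc (hG.isCyclic_of_card_ker_powMonoidHom_le hp ?_))
  rw [hj]
  exact (Nat.pow_le_pow_right hp.pos (Nat.lt_succ_iff.mp hj2)).trans_eq (pow_one p)

end CommGroup

/-- The set `C(G)` of the statement. -/
def cyclicOver {G : Type*} [Group G] (U : Subgroup G) (p : ℕ) : Set (Subgroup G) :=
  {V | IsCyclic V ∧ U ≤ V ∧ U.relIndex V = p}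

section CyclicOver

variable {G : Type*} [CommGroup G] {p : ℕ} {U : Subgroup G}

theorem card_of_mem_cyclicOver (hU : Nat.card U = p) {V : Subgroup G}
    (hV : V ∈ cyclicOver U p) : Nat.card V = p * p := by
  rw [← card_mul_relIndex hV.2.1, hU, hV.2.2]

theorem zpowers_mem_cyclicOver_iff (hp : p.Prime) (hU : Nat.card U = p) (x : G) :
    zpowers x ∈ cyclicOver U p ↔ x ^ p ∈ U ∧ x ^ p ≠ 1 := by
  have := Fact.mk hp
  constructor
  · intro hx
    have hord : orderOf x = p * p := by
      rw [← Nat.card_zpowers, card_of_mem_cyclicOver hU hx]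
    refine ⟨hx.2.2 ▸ U.pow_relIndex_mem (mem_zpowers x), fun h1 => ?_⟩
    have := Nat.le_of_dvd hp.pos (hord ▸ orderOf_dvd_of_pow_eq_one h1)
    nlinarith [hp.two_le]
  · rintro ⟨hxU, hx1⟩
    have : Finite U := Nat.finite_of_card_ne_zero (hU ▸ hp.ne_zero)
    have hordp : orderOf (x ^ p) = p :=
      (hp.eq_one_or_self_of_dvd _ (by simpa only [hU] using U.orderOf_dvd_natCard hxU)).resolve_left
        (mt orderOf_eq_one_iff.mp hx1)
    have hUx : zpowers (x ^ p) = U :=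
      eq_of_le_of_card_ge (zpowers_le.mpr hxU) (by rw [hU, Nat.card_zpowers, hordp])
    have hUle : U ≤ zpowers x := hUx ▸ zpowers_le.mpr (pow_mem (mem_zpowers x) p)
    have hord : orderOf x = p ^ 2 := by
      refine orderOf_eq_prime_pow (by rwa [pow_one]) ?_
      rw [sq, pow_mul]
      simpa only [hordp] using pow_orderOf_eq_one (x ^ p)
    refine ⟨inferInstance, hUle, Nat.eq_of_mul_eq_mul_left hp.pos ?_⟩
    rw [← hU, card_mul_relIndex hUle, Nat.card_zpowers, hord, hU, sq]

theorem card_preimage_eq_card_cyclicOver_mul [Finite G] (hp : p.Prime) (hU : Nat.card U = p) :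
    Nat.card ((powMonoidHom p : G →* G) ⁻¹' (U \ {1})) =
      Nat.card (cyclicOver U p) * (p ^ 2).totient := by
  refine Nat.card_eq_card_mul_of_forall_card_fiber
    (fun x => ⟨zpowers x.1, (zpowers_mem_cyclicOver_iff hp hU x).mpr x.2⟩) fun V => ?_
  have := V.2.1
  rw [sq, ← card_of_mem_cyclicOver hU V.2, ← card_generators_eq_totient]
  refine Nat.card_congr ((Equiv.subtypeEquivRight fun x => ?_).trans
    (Equiv.subtypeSubtypeEquivSubtype fun {x} hx => ?_))
  · exact Subtype.ext_iff
  · exact (zpowers_mem_cyclicOver_iff hp hU x).mp (hx ▸ V.2)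

theorem card_cyclicOver_eq_one [Finite G] [IsCyclic G] (hp : p.Prime) (hU : Nat.card U = p)
    (hG : p ^ 2 ∣ Nat.card G) : Nat.card (cyclicOver U p) = 1 := by
  have hpG : p ∣ Nat.card G := (dvd_pow_self p two_ne_zero).trans hG
  have hE : (powMonoidHom p : G →* G).ker = U := by
    refine (eq_of_le_of_card_ge (fun u hu => ?_) ?_).symm
    · exact orderOf_dvd_iff_pow_eq_one.mp (hU ▸ U.orderOf_dvd_natCard hu)
    · rw [IsCyclic.card_powMonoidHom_ker, Nat.gcd_eq_right hpG, hU]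
  have hX : (powMonoidHom p : G →* G) ⁻¹' (U \ {1}) =
      ((powMonoidHom (p ^ 2) : G →* G).ker : Set G) \ (powMonoidHom p : G →* G).ker := by
    ext x
    simp [← hE, sq, pow_mul]
  have hsub : ((powMonoidHom p : G →* G).ker : Set G) ⊆ (powMonoidHom (p ^ 2) : G →* G).ker :=
    fun x (hx : x ^ p = 1) => show x ^ p ^ 2 = 1 by rw [sq, pow_mul, hx, one_pow]
  have hcard : Nat.card ((powMonoidHom p : G →* G) ⁻¹' (U \ {1})) = (p ^ 2).totient := by
    rw [hX, Nat.card_coe_set_eq, Set.ncard_sdiff hsub, ← Nat.card_coe_set_eq,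
      ← Nat.card_coe_set_eq, SetLike.coe_sort_coe, SetLike.coe_sort_coe,
      IsCyclic.card_powMonoidHom_ker, IsCyclic.card_powMonoidHom_ker, Nat.gcd_eq_right hG,
      Nat.gcd_eq_right hpG, Nat.totient_prime_pow_succ hp, pow_one, sq, Nat.mul_sub_one]
  rw [card_preimage_eq_card_cyclicOver_mul hp hU] at hcard
  exact (Nat.mul_eq_right (Nat.totient_pos.mpr (pow_pos hp.pos 2)).ne').mp hcard

theorem dvd_card_cyclicOver [Finite G] (hp : p.Prime) (hG : IsPGroup p G) (hU : Nat.card U = p)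
    (hnc : ¬ IsCyclic G) : p ∣ Nat.card (cyclicOver U p) := by
  have h := (hG.sq_dvd_card_ker_powMonoidHom hp hnc).trans
    ((powMonoidHom p : G →* G).card_ker_dvd_card_preimage (U \ {1}))
  rw [card_preimage_eq_card_cyclicOver_mul hp hU, Nat.totient_prime_pow_succ hp, pow_one,
    sq, mul_left_comm] at h
  refine (hp.dvd_mul.mp (Nat.dvd_of_mul_dvd_mul_left hp.pos h)).resolve_right ?_
  exact Nat.not_dvd_of_pos_of_lt (Nat.sub_pos_of_lt hp.one_lt) (Nat.sub_lt hp.pos one_pos)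

end CyclicOver

theorem artin_stmt6 {G : Type*} [CommGroup G] [Finite G] {p : ℕ}
    (hp : p.Prime) (hG : IsPGroup p G) (U : Subgroup G)
    (hU : Nat.card U = p) (hbig : p ^ 2 ∣ Nat.card G) :
    ((Nat.card {V : Subgroup G | IsCyclic ↥V ∧ U ≤ V ∧ U.relIndex V = p} = 1 ↔
        ¬ p ∣ Nat.card {V : Subgroup G | IsCyclic ↥V ∧ U ≤ V ∧ U.relIndex V = p}) ∧
      (¬ p ∣ Nat.card {V : Subgroup G | IsCyclic ↥V ∧ U ≤ V ∧ U.relIndex V = p} ↔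
        IsCyclic G)) := by
  change (Nat.card (cyclicOver U p) = 1 ↔ ¬ p ∣ Nat.card (cyclicOver U p)) ∧
    (¬ p ∣ Nat.card (cyclicOver U p) ↔ IsCyclic G)
  by_cases hcyc : IsCyclic G
  · rw [card_cyclicOver_eq_one hp hU hbig]
    exact ⟨iff_of_true rfl hp.not_dvd_one, iff_of_true hp.not_dvd_one hcyc⟩
  · have hdvd := dvd_card_cyclicOver hp hG hU hcyc
    have hne : Nat.card (cyclicOver U p) ≠ 1 := fun h => hp.not_dvd_one (h ▸ hdvd)
    exact ⟨iff_of_false hne (not_not_intro hdvd), iff_of_false (not_not_intro hdvd) hcyc⟩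
end

section
/- Let G be a finite 2-group of order at least 4, U a normal subgroup of order 2 with [G,G] ⊆ U, and suppose the number of cyclic subgroups V of G with U ≤ V and (V:U) = 2 is odd. Then G is cyclic or G is a nonabelian group of order 8. -/
/-!
`U = {1, u}` is central and contains every commutator, so squaring descends to a map
`G ⧸ U → G`. On `E = {a ∈ G ⧸ U | a ^ 2 = 1}` its values lie in `U ≃ 𝔽₂`, and it becomes a
quadratic form whose polar form is the commutator pairing. The subgroups in `C(G)` are the
`zpowers x` with `x ^ 2 = u`, and `zpowers x = zpowers y` exactly when `xU = yU`, so `|C(G)|` is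
the number of points of `E` where the form equals `1`.

Such a count is even as soon as `8 ∣ |E|`, or `4 ∣ |E|` and the polar form has a nontrivial
radical element. Hence either `|E| ≤ 2`: the abelian `2`-group `G ⧸ U` has at most one
involution, so it is cyclic, and then so is `G` because `u` is a square. Or `|E| = 4` and the
polar form is nondegenerate: then `G` is not abelian, and `G ⧸ U = E` because the square of an
element of order `4` would be a radical element.
-/

open Subgroup Finset
open scoped commutatorElement IsMulCommutative

section QuadraticCount

theorem ZMod.sum_eq_card_filter_eq_one {α : Type*} [Fintype α] (f : α → ZMod 2) :
    ∑ a, f a = #{a | f a = 1} := by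
  have h01 : ∀ x : ZMod 2, x = if x = 1 then 1 else 0 := by decide
  rw [← Finset.sum_boole]
  exact Finset.sum_congr rfl fun a _ => h01 (f a)

variable {E : Type*} [Group E]

theorem Subgroup.sum_eq_sum_add_sum_mul_of_index_two [Fintype E] {M : Type*} [AddCommMonoid M]
    {H : Subgroup E} [DecidablePred (· ∈ H)] (hH : H.index = 2) {w : E} (hw : w ∉ H)
    (f : E → M) : ∑ a, f a = ∑ h : H, (f h + f (h * w)) := by
  have hcoset : ∀ a, a ∈ H ↔ a * w ∉ H := fun a => by
    simp [mul_mem_iff_of_index_two hH, hw]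
  rw [Finset.sum_add_distrib, ← Fintype.sum_subtype_add_sum_subtype (· ∈ H) f]
  congr 1
  exact (Fintype.sum_equiv (Equiv.subtypeEquiv (Equiv.mulRight w) hcoset) _ _ fun _ => rfl).symm

theorem exists_index_eq_two_of_card_eq_two_pow [Finite E] {n : ℕ}
    (hn : Nat.card E = 2 ^ (n + 1)) : ∃ H : Subgroup E, H.index = 2 ∧ Nat.card H = 2 ^ n := by
  have : Fact (Nat.Prime 2) := ⟨Nat.prime_two⟩
  obtain ⟨H, hH⟩ := Sylow.exists_subgroup_card_pow_prime 2 (hn ▸ pow_dvd_pow 2 n.le_succ)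
  refine ⟨H, ?_, hH⟩
  have := H.card_mul_index
  rw [hH, hn, pow_succ] at this
  exact Nat.eq_of_mul_eq_mul_left (by positivity) this

def mulPolar {M : Type*} [Mul M] (q : M → ZMod 2) (a c : M) : ZMod 2 := q (a * c) - q a - q c

theorem mulPolar_eq_add {M : Type*} [Mul M] (q : M → ZMod 2) (a c : M) :
    q (a * c) = q a + q c + mulPolar q a c := by
  unfold mulPolar
  ring

variable [Fintype E] (q : E → ZMod 2)

/-- Multiplication by `r` pairs `a` with `a * r`; these have equal values of `q` when `q r = 0`
and opposite values when `q r = 1`. -/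
theorem even_card_filter_eq_one_of_mulPolar_eq_zero {r : E} (hr : orderOf r = 2)
    (hrad : ∀ a, mulPolar q a r = 0) (h4 : 4 ∣ Nat.card E) : Even #{a | q a = 1} := by
  classical
  rw [Nat.card_eq_fintype_card] at h4
  have hqr : ∀ a, q (a * r) = q a + q r := fun a => by rw [mulPolar_eq_add q, hrad, add_zero]
  have hrr : ∀ a, a * r * r = a := fun a => by
    rw [mul_assoc, ← sq, ← hr, pow_orderOf_eq_one, mul_one]
  have hne : ∀ a, a * r ≠ a := fun a h => by
    simp only [mul_eq_left] at h
    simp [h] at hr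
  rcases (by decide : ∀ x : ZMod 2, x = 0 ∨ x = 1) (q r) with h0 | h1
  · let σ : Equiv.Perm {a // q a = 1} :=
      Equiv.subtypeEquiv (Equiv.mulRight r) fun a => by simp [hqr, h0]
    have hσ : σ ^ 2 = 1 := by ext a; simp [σ, sq, hrr]
    have hsupp : σ.support = univ := by ext a; simp [σ, Subtype.ext_iff, hne]
    rw [← Fintype.card_subtype, even_iff_two_dvd, ← Finset.card_univ, ← hsupp]
    exact Equiv.Perm.two_dvd_card_support hσ
  · have hcompl : Fintype.card {a // q a = 1} = Fintype.card {a // ¬ q a = 1} :=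
      Fintype.card_congr <| Equiv.subtypeEquiv (Equiv.mulRight r) fun a => by
        rcases (by decide : ∀ x : ZMod 2, x = 0 ∨ x = 1) (q a) with h | h <;> simp [hqr, h, h1]
    have htot := Fintype.card_subtype_compl (fun a => q a = 1)
    rw [← Fintype.card_subtype, even_iff_two_dvd]
    omega

/-- With `w ∉ H`, the sum of `q` over `E = H ⊔ H * w` is `|H| q(w) + ∑ h : H, polar(h, w)`,
and the second count is even because `polar(·, w)` is a homomorphism on `H`. -/
theorem even_card_filter_eq_one_of_mulPolar_mul_left {H : Subgroup E} (hH : H.index = 2)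
    (h4 : 4 ∣ Nat.card H)
    (hpolar : ∀ a a' c, mulPolar q (a * a') c = mulPolar q a c + mulPolar q a' c) :
    Even #{a | q a = 1} := by
  classical
  have : Fact (Nat.Prime 2) := ⟨Nat.prime_two⟩
  obtain ⟨w, hw, -⟩ := index_eq_two_iff_exists_notMem_and.mp hH
  obtain ⟨r, hr⟩ := exists_prime_orderOf_dvd_card' (G := H) 2 (dvd_trans ⟨2, rfl⟩ h4)
  have hpolar_w : Even #{h : H | mulPolar q h w = 1} := by
    refine even_card_filter_eq_one_of_mulPolar_eq_zero (fun h : H => mulPolar q h w) hr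
      (fun h => ?_) h4
    change mulPolar q (h * r) w - mulPolar q h w - mulPolar q r w = 0
    rw [hpolar]
    ring
  have hsum : ∑ a, q a = ∑ h : H, mulPolar q h w + Nat.card H * q w := by
    rw [Subgroup.sum_eq_sum_add_sum_mul_of_index_two hH hw, Nat.card_eq_fintype_card,
      ← nsmul_eq_mul, ← Finset.card_univ, ← Finset.sum_const, ← Finset.sum_add_distrib]
    refine Finset.sum_congr rfl fun h _ => ?_
    rw [mulPolar_eq_add q]
    linear_combination CharTwo.add_self_eq_zero (q h)
  rw [← ZMod.natCast_eq_zero_iff_even, ← ZMod.sum_eq_card_filter_eq_one, hsum,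
    ZMod.sum_eq_card_filter_eq_one, ZMod.natCast_eq_zero_iff_even.mpr hpolar_w,
    ZMod.natCast_eq_zero_iff_even.mpr (even_iff_two_dvd.mpr (dvd_trans ⟨2, rfl⟩ h4))]
  simp

end QuadraticCount

section FewInvolutions

variable {A : Type*} [Group A] [IsMulCommutative A] [Fintype A] [DecidableEq A]

theorem card_pow_two_pow_eq_one_le (h : #{a : A | a ^ 2 = 1} ≤ 2) (k : ℕ) :
    #{a : A | a ^ 2 ^ k = 1} ≤ 2 ^ k := by
  induction k with
  | zero => simpa using Finset.card_le_one.mpr fun a ha b hb => by simp_all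
  | succ k ih =>
    set s : Finset A := {a | a ^ 2 ^ (k + 1) = 1}
    have himage : s.image (· ^ 2) ⊆ ({a | a ^ 2 ^ k = 1} : Finset A) := by
      intro b hb
      obtain ⟨a, ha, rfl⟩ := Finset.mem_image.mp hb
      simp only [s, Finset.mem_filter, Finset.mem_univ, true_and] at ha ⊢
      rwa [← pow_mul, ← pow_succ']
    have hfiber : ∀ b ∈ s.image (· ^ 2), #{a ∈ s | a ^ 2 = b} ≤ 2 := by
      intro b hb
      obtain ⟨a₀, -, rfl⟩ := Finset.mem_image.mp hb
      calc #{a ∈ s | a ^ 2 = a₀ ^ 2}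
          ≤ #(({a | a ^ 2 = 1} : Finset A).image (· * a₀)) := by
            refine Finset.card_le_card fun a ha => Finset.mem_image.mpr ⟨a * a₀⁻¹, ?_, by simp⟩
            simp only [Finset.mem_filter, Finset.mem_univ, true_and] at ha ⊢
            rw [Commute.mul_pow (mul_comm' a a₀⁻¹), ha.2, inv_pow, mul_inv_cancel]
        _ ≤ 2 := Finset.card_image_le.trans h
    calc #s ≤ 2 * #(s.image (· ^ 2)) := Finset.card_le_mul_card_image s 2 hfiber
      _ ≤ 2 * 2 ^ k := Nat.mul_le_mul_left 2 (Finset.card_le_card himage |>.trans ih)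
      _ = 2 ^ (k + 1) := by ring

theorem isCyclic_of_card_sq_eq_one_le_two (hA : IsPGroup 2 A) (h : #{a : A | a ^ 2 = 1} ≤ 2) :
    IsCyclic A := by
  have : Fact (Nat.Prime 2) := ⟨Nat.prime_two⟩
  obtain ⟨n, hn⟩ := IsPGroup.iff_card.mp hA
  cases n with
  | zero => exact isCyclic_of_orderOf_eq_card 1 (by simpa using hn.symm)
  | succ m =>
    obtain ⟨a, ha⟩ : ∃ a : A, ¬ a ^ 2 ^ m = 1 := by
      by_contra! hall
      have := card_pow_two_pow_eq_one_le h m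
      rw [Finset.filter_true_of_mem fun a _ => hall a, Finset.card_univ,
        ← Nat.card_eq_fintype_card, hn, pow_succ] at this
      have : 0 < 2 ^ m := by positivity
      omega
    refine isCyclic_of_orderOf_eq_card a (hn ▸ orderOf_eq_prime_pow ha ?_)
    rw [← hn]
    exact pow_card_eq_one'

end FewInvolutions

theorem IsPGroup.exists_orderOf_eq_four {A : Type*} [Group A] (hA : IsPGroup 2 A) {a : A}
    (ha : a ^ 2 ≠ 1) : ∃ w : A, orderOf w = 4 := by
  have : Fact (Nat.Prime 2) := ⟨Nat.prime_two⟩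
  obtain ⟨k, hk⟩ := IsPGroup.iff_orderOf.mp hA a
  have h4 : 4 ∣ orderOf a := by
    rw [hk, show 4 = 2 ^ 2 by rfl]
    refine pow_dvd_pow 2 (not_lt.mp fun hk2 => ha (orderOf_dvd_iff_pow_eq_one.mp ?_))
    rw [hk]
    exact (pow_dvd_pow 2 (by omega : k ≤ 1)).trans (pow_one 2).dvd
  exact ⟨a ^ (orderOf a / 4), orderOf_pow_orderOf_div (by simp [hk]) h4⟩

section Commutators

variable {G : Type*} [Group G]

theorem mul_sq_of_commutatorElement_mem_center {x y : G} (h : ⁅y, x⁆ ∈ center G) :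
    (x * y) ^ 2 = ⁅y, x⁆ * x ^ 2 * y ^ 2 := by
  calc (x * y) ^ 2 = x * ⁅y, x⁆ * x⁻¹ * x ^ 2 * y ^ 2 := by
        simp only [sq, commutatorElement_def]
        group
    _ = ⁅y, x⁆ * x ^ 2 * y ^ 2 := by rw [mem_center_iff.mp h x, mul_inv_cancel_right]

theorem commutatorElement_mul_right_of_mem_center {a b c : G} (h : ⁅a, c⁆ ∈ center G) :
    ⁅a, b * c⁆ = ⁅a, b⁆ * ⁅a, c⁆ := by
  rw [commutatorElement_mul_right_eq_mul_conj, mul_assoc _ b, mem_center_iff.mp h b]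
  group

theorem commutatorElement_mul_left_of_mem_center {a b c : G} (h : ⁅b, c⁆ ∈ center G) :
    ⁅a * b, c⁆ = ⁅b, c⁆ * ⁅a, c⁆ := by
  rw [commutatorElement_mul_left_eq_conj_mul, mem_center_iff.mp h a]
  group

end Commutators

section SquareRoots

variable {G : Type*} [Group G] {u x y : G}

theorem orderOf_eq_four_of_sq_eq (hu1 : u ≠ 1) (hu2 : u ^ 2 = 1) (hx : x ^ 2 = u) :
    orderOf x = 4 :=
  orderOf_eq_prime_pow (p := 2) (n := 1) (by rwa [pow_one, hx])
    (by rw [pow_succ, pow_mul, pow_one, hx, hu2])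

theorem zpowers_eq_zpowers_iff_of_sq_eq (hu1 : u ≠ 1) (hu2 : u ^ 2 = 1) (hx : x ^ 2 = u)
    (hy : y ^ 2 = u) : zpowers x = zpowers y ↔ x⁻¹ * y ∈ zpowers u := by
  constructor
  · intro h
    obtain ⟨k, rfl⟩ := mem_zpowers_iff.mp (h ▸ mem_zpowers y : y ∈ zpowers x)
    obtain ⟨m, hm⟩ : (4 : ℤ) ∣ 2 * k - 2 := by
      rw [show (4 : ℤ) = ((4 : ℕ) : ℤ) by rfl, ← orderOf_eq_four_of_sq_eq hu1 hu2 hx,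
        orderOf_dvd_iff_zpow_eq_one, zpow_sub, mul_comm, zpow_mul]
      norm_cast
      rw [hy, hx, mul_inv_cancel]
    refine mem_zpowers_iff.mpr ⟨m, ?_⟩
    rw [← hx, ← zpow_ofNat, ← zpow_mul, ← zpow_neg_one, ← zpow_add]
    congr 1
    omega
  · intro h
    obtain ⟨m, hm⟩ := mem_zpowers_iff.mp h
    have hux : u ∈ zpowers x := hx ▸ pow_mem (mem_zpowers x) 2
    have huy : u ∈ zpowers y := hy ▸ pow_mem (mem_zpowers y) 2
    refine le_antisymm (zpowers_le.mpr ?_) (zpowers_le.mpr ?_)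
    · rw [show x = y * (u ^ m)⁻¹ by rw [hm]; group]
      exact mul_mem (mem_zpowers y) (inv_mem (zpow_mem huy m))
    · rw [← mul_inv_cancel_left x y, ← hm]
      exact mul_mem (mem_zpowers x) (zpow_mem hux m)

end SquareRoots

namespace Subgroup

variable {G : Type*} [Group G] {U : Subgroup G}

theorem relIndex_mul_card {H K : Subgroup G} (h : H ≤ K) :
    H.relIndex K * Nat.card H = Nat.card K := by
  rw [← Nat.card_congr (subgroupOfEquivOfLe h).toEquiv]
  exact (H.subgroupOf K).index_mul_card

theorem eq_of_card_eq_two (hU : Nat.card U = 2) {v w : G} (hv : v ∈ U) (hw : w ∈ U)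
    (hv1 : v ≠ 1) (hw1 : w ≠ 1) : v = w := by
  obtain ⟨y, -, hy⟩ := (Nat.card_eq_two_iff' (1 : U)).mp hU
  have := (hy ⟨v, hv⟩ (by simpa using hv1)).trans (hy ⟨w, hw⟩ (by simpa using hw1)).symm
  exact congrArg Subtype.val this

theorem eq_one_or_eq_of_card_eq_two (hU : Nat.card U = 2) {u v : G} (hu : u ∈ U) (hu1 : u ≠ 1)
    (hv : v ∈ U) : v = 1 ∨ v = u :=
  or_iff_not_imp_left.mpr fun hv1 => eq_of_card_eq_two hU hv hu hv1 hu1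

theorem sq_eq_one_of_card_eq_two (hU : Nat.card U = 2) {v : G} (hv : v ∈ U) : v ^ 2 = 1 := by
  have := pow_card_eq_one' (G := U) (x := ⟨v, hv⟩)
  rw [hU] at this
  exact congrArg Subtype.val this

theorem le_center_of_card_eq_two [U.Normal] (hU : Nat.card U = 2) : U ≤ center G := by
  intro v hv
  refine mem_center_iff.mpr fun g => ?_
  by_cases hv1 : v = 1
  · simp [hv1]
  have hconj : g * v * g⁻¹ = v :=
    eq_of_card_eq_two hU (Normal.conj_mem ‹_› v hv g) hv (by simpa using hv1) hv1
  exact mul_inv_eq_iff_eq_mul.mp hconj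

theorem zpowers_eq_of_card_eq_two (hU : Nat.card U = 2) {u : G} (hu : u ∈ U) (hu1 : u ≠ 1) :
    zpowers u = U := by
  refine le_antisymm (zpowers_le.mpr hu) fun v hv => ?_
  rcases eq_one_or_eq_of_card_eq_two hU hu hu1 hv with rfl | rfl
  exacts [one_mem _, mem_zpowers v]

theorem indicator_mul_of_card_eq_two (hU : Nat.card U = 2) {u v w : G} (hu : u ∈ U)
    (hu1 : u ≠ 1) (hv : v ∈ U) (hw : w ∈ U) :
    Set.indicator {u} (1 : G → ZMod 2) (v * w) = Set.indicator {u} 1 v + Set.indicator {u} 1 w := by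
  have huu : u * u = 1 := by rw [← sq, sq_eq_one_of_card_eq_two hU hu]
  rcases eq_one_or_eq_of_card_eq_two hU hu hu1 hv with rfl | rfl <;>
  rcases eq_one_or_eq_of_card_eq_two hU hu hu1 hw with rfl | rfl <;>
  simp [hu1.symm, huu]
  decide

theorem isCyclic_and_le_and_relIndex_eq_two_iff (hU : Nat.card U = 2) {u : G} (hu : u ∈ U)
    (hu1 : u ≠ 1) {V : Subgroup G} :
    (IsCyclic V ∧ U ≤ V ∧ U.relIndex V = 2) ↔ ∃ x, x ^ 2 = u ∧ zpowers x = V := by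
  constructor
  · rintro ⟨hcyc, hUV, hrel⟩
    obtain ⟨x, rfl⟩ := V.isCyclic_iff_exists_zpowers_eq_top.mp hcyc
    have hord : orderOf x = 4 := by
      rw [← Nat.card_zpowers, ← relIndex_mul_card hUV, hrel, hU]
    have hx2 : x ^ 2 ∈ U := by
      simpa [mem_subgroupOf] using sq_mem_of_index_two hrel ⟨x, mem_zpowers x⟩
    refine ⟨x, (eq_one_or_eq_of_card_eq_two hU hu hu1 hx2).resolve_left fun h => ?_, rfl⟩
    have := orderOf_le_of_pow_eq_one (by norm_num) h
    omega
  · rintro ⟨x, hx, rfl⟩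
    have hUV : U ≤ zpowers x := by
      rw [← zpowers_eq_of_card_eq_two hU hu hu1, zpowers_le, ← hx]
      exact pow_mem (mem_zpowers x) 2
    refine ⟨inferInstance, hUV, ?_⟩
    have := relIndex_mul_card hUV
    rw [hU, Nat.card_zpowers, orderOf_eq_four_of_sq_eq hu1 (sq_eq_one_of_card_eq_two hU hu) hx]
      at this
    omega

end Subgroup

section QuotientSquare

variable {G : Type*} [Group G] {U : Subgroup G} [U.Normal]

/-- Well defined because `U` is central of exponent two. -/
def quotientSq (hU : Nat.card U = 2) (a : G ⧸ U) : G :=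
  Quotient.liftOn' a (· ^ 2) fun x y hxy => by
    have hv := QuotientGroup.leftRel_apply.mp hxy
    have hc : Commute x (x⁻¹ * y) := mem_center_iff.mp (le_center_of_card_eq_two hU hv) x
    change x ^ 2 = y ^ 2
    rw [← mul_inv_cancel_left x y, hc.mul_pow, sq_eq_one_of_card_eq_two hU hv, mul_one]

variable (hU : Nat.card U = 2)

@[simp]
theorem quotientSq_mk (x : G) : quotientSq hU (x : G ⧸ U) = x ^ 2 := rfl

theorem quotientSq_mem_iff (a : G ⧸ U) : quotientSq hU a ∈ U ↔ a ^ 2 = 1 := by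
  obtain ⟨x, rfl⟩ := QuotientGroup.mk_surjective a
  rw [quotientSq_mk, ← QuotientGroup.mk_pow, QuotientGroup.eq_one_iff]

/-- Squaring followed by the identification of `U = {1, u}` with `ZMod 2`. -/
noncomputable def sqForm (u : G) : G ⧸ U → ZMod 2 := Set.indicator {u} 1 ∘ quotientSq hU

theorem sqForm_eq_one_iff (u : G) (a : G ⧸ U) : sqForm hU u a = 1 ↔ quotientSq hU a = u := by
  by_cases h : quotientSq hU a = u <;> simp [sqForm, h]

variable {u : G}

theorem card_filter_sqForm_eq_one (hu : u ∈ U) (E : Subgroup (G ⧸ U)) [Fintype E]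
    (hE : ∀ a, a ∈ E ↔ a ^ 2 = 1) :
    #{a : E | sqForm hU u a = 1} = Nat.card {a : G ⧸ U // quotientSq hU a = u} := by
  rw [← Fintype.card_subtype, ← Nat.card_eq_fintype_card]
  refine Nat.card_congr <| (Equiv.subtypeEquivRight fun a : E => sqForm_eq_one_iff hU u a).trans
    (Equiv.subtypeSubtypeEquivSubtype fun {a} (ha : quotientSq hU a = u) => (hE a).mpr ?_)
  exact (quotientSq_mem_iff hU a).mp (ha ▸ hu)

theorem card_cyclic_eq_card_quotientSq_eq (hu : u ∈ U) (hu1 : u ≠ 1) :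
    Nat.card {V : Subgroup G | IsCyclic V ∧ U ≤ V ∧ U.relIndex V = 2} =
      Nat.card {a : G ⧸ U // quotientSq hU a = u} := by
  have hu2 := sq_eq_one_of_card_eq_two hU hu
  have hout : ∀ a : G ⧸ U, quotientSq hU a = u → a.out ^ 2 = u := fun a ha => by
    rwa [← quotientSq_mk hU, QuotientGroup.out_eq']
  symm
  refine Nat.card_eq_of_bijective (fun a => ⟨zpowers a.1.out,
    (isCyclic_and_le_and_relIndex_eq_two_iff hU hu hu1).mpr ⟨_, hout a.1 a.2, rfl⟩⟩) ⟨?_, ?_⟩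
  · rintro ⟨a, ha⟩ ⟨b, hb⟩ hab
    have := (zpowers_eq_zpowers_iff_of_sq_eq hu1 hu2 (hout a ha) (hout b hb)).mp
      (congrArg Subtype.val hab)
    rw [zpowers_eq_of_card_eq_two hU hu hu1] at this
    rw [Subtype.mk.injEq, ← QuotientGroup.out_eq' a, ← QuotientGroup.out_eq' b]
    exact QuotientGroup.eq.mpr this
  · rintro ⟨V, hV⟩
    obtain ⟨x, hx, rfl⟩ := (isCyclic_and_le_and_relIndex_eq_two_iff hU hu hu1).mp hV
    refine ⟨⟨(x : G ⧸ U), hx⟩, Subtype.ext ?_⟩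
    refine ((zpowers_eq_zpowers_iff_of_sq_eq hu1 hu2 hx (hout (x : G ⧸ U) hx)).mpr ?_).symm
    rw [zpowers_eq_of_card_eq_two hU hu hu1]
    exact QuotientGroup.eq.mp (QuotientGroup.out_eq' _).symm

include hU in
theorem isCyclic_of_isCyclic_quotient_of_sq_eq [IsCyclic (G ⧸ U)] (hu : u ∈ U) (hu1 : u ≠ 1)
    {x : G} (hx : x ^ 2 = u) : IsCyclic G := by
  obtain ⟨g, hg⟩ := IsCyclic.exists_generator (α := G ⧸ U)
  obtain ⟨g, rfl⟩ := QuotientGroup.mk_surjective g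
  have hdecomp : ∀ y : G, ∃ k : ℤ, (g ^ k)⁻¹ * y ∈ U := fun y => by
    obtain ⟨k, hk⟩ := mem_zpowers_iff.mp (hg y)
    exact ⟨k, QuotientGroup.eq.mp (by rw [QuotientGroup.mk_zpow, hk])⟩
  have hUg : U ≤ zpowers g := by
    obtain ⟨k, hk⟩ := hdecomp x
    have hc : Commute (g ^ k) ((g ^ k)⁻¹ * x) :=
      mem_center_iff.mp (le_center_of_card_eq_two hU hk) _
    rw [← zpowers_eq_of_card_eq_two hU hu hu1, zpowers_le, ← hx, ← mul_inv_cancel_left (g ^ k) x,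
      hc.mul_pow, sq_eq_one_of_card_eq_two hU hk, mul_one]
    exact pow_mem (zpow_mem (mem_zpowers g) k) 2
  refine ⟨g, fun y => ?_⟩
  obtain ⟨k, hk⟩ := hdecomp y
  rw [← mul_inv_cancel_left (g ^ k) y]
  exact mul_mem (zpow_mem (mem_zpowers g) k) (hUg hk)

variable (hu : u ∈ U) (hu1 : u ≠ 1) (hcomm : ∀ x y : G, ⁅x, y⁆ ∈ U)
include hu hu1 hcomm

theorem mulPolar_sqForm_mk {x y : G} (hx : (x : G ⧸ U) ^ 2 = 1) (hy : (y : G ⧸ U) ^ 2 = 1) :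
    mulPolar (sqForm hU u) (x : G ⧸ U) y = Set.indicator {u} 1 ⁅y, x⁆ := by
  have hx2 := (quotientSq_mem_iff hU _).mpr hx
  have hy2 := (quotientSq_mem_iff hU _).mpr hy
  have hyx := hcomm y x
  simp only [mulPolar, sqForm, Function.comp_apply, ← QuotientGroup.mk_mul, quotientSq_mk,
    mul_sq_of_commutatorElement_mem_center (le_center_of_card_eq_two hU hyx)] at hx2 hy2 ⊢
  rw [indicator_mul_of_card_eq_two hU hu hu1 (mul_mem hyx hx2) hy2,
    indicator_mul_of_card_eq_two hU hu hu1 hyx hx2]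
  ring

theorem mulPolar_sqForm_mul_left {a a' c : G ⧸ U} (ha : a ^ 2 = 1) (ha' : a' ^ 2 = 1)
    (hc : c ^ 2 = 1) :
    mulPolar (sqForm hU u) (a * a') c =
      mulPolar (sqForm hU u) a c + mulPolar (sqForm hU u) a' c := by
  obtain ⟨x, rfl⟩ := QuotientGroup.mk_surjective a
  obtain ⟨x', rfl⟩ := QuotientGroup.mk_surjective a'
  obtain ⟨y, rfl⟩ := QuotientGroup.mk_surjective c
  have hxx' : ((x * x' : G) : G ⧸ U) ^ 2 = 1 := by
    rw [← quotientSq_mem_iff hU, quotientSq_mk,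
      mul_sq_of_commutatorElement_mem_center (le_center_of_card_eq_two hU (hcomm x' x))]
    exact mul_mem (mul_mem (hcomm x' x) ((quotientSq_mem_iff hU _).mpr ha))
      ((quotientSq_mem_iff hU _).mpr ha')
  rw [← QuotientGroup.mk_mul, mulPolar_sqForm_mk hU hu hu1 hcomm hxx' hc,
    mulPolar_sqForm_mk hU hu hu1 hcomm ha hc, mulPolar_sqForm_mk hU hu hu1 hcomm ha' hc,
    commutatorElement_mul_right_of_mem_center (le_center_of_card_eq_two hU (hcomm y x')),
    indicator_mul_of_card_eq_two hU hu hu1 (hcomm y x) (hcomm y x')]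

theorem mulPolar_sqForm_sq_right {a w : G ⧸ U} (ha : a ^ 2 = 1) (hw : (w ^ 2) ^ 2 = 1) :
    mulPolar (sqForm hU u) a (w ^ 2) = 0 := by
  obtain ⟨x, rfl⟩ := QuotientGroup.mk_surjective a
  obtain ⟨z, rfl⟩ := QuotientGroup.mk_surjective w
  rw [← QuotientGroup.mk_pow] at hw ⊢
  have hzx : ⁅z ^ 2, x⁆ = 1 := by
    rw [sq z, commutatorElement_mul_left_of_mem_center (le_center_of_card_eq_two hU (hcomm z x)),
      ← sq, sq_eq_one_of_card_eq_two hU (hcomm z x)]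
  rw [mulPolar_sqForm_mk hU hu hu1 hcomm ha hw, hzx]
  simp [hu1.symm]

theorem mulPolar_sqForm_eq_zero_of_comm (hG : ∀ x y : G, x * y = y * x) {a c : G ⧸ U}
    (ha : a ^ 2 = 1) (hc : c ^ 2 = 1) : mulPolar (sqForm hU u) a c = 0 := by
  obtain ⟨x, rfl⟩ := QuotientGroup.mk_surjective a
  obtain ⟨y, rfl⟩ := QuotientGroup.mk_surjective c
  rw [mulPolar_sqForm_mk hU hu hu1 hcomm ha hc,
    commutatorElement_eq_one_iff_mul_comm.mpr (hG y x)]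
  simp [hu1.symm]

variable (E : Subgroup (G ⧸ U)) [Fintype E] (hodd : Odd #{a : E | sqForm hU u a = 1})
include hodd

theorem card_le_two_or_eq_four (hG : IsPGroup 2 G) (hE : ∀ a ∈ E, a ^ 2 = 1) :
    Nat.card E ≤ 2 ∨ Nat.card E = 4 := by
  have : Fact (Nat.Prime 2) := ⟨Nat.prime_two⟩
  obtain ⟨n, hn⟩ := IsPGroup.iff_card.mp ((hG.to_quotient U).to_subgroup E)
  have hn2 : n ≤ 2 := by
    by_contra! hn3
    obtain ⟨m, rfl⟩ : ∃ m, n = m + 3 := ⟨n - 3, by omega⟩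
    obtain ⟨H, hH, hHcard⟩ := exists_index_eq_two_of_card_eq_two_pow (n := m + 2) hn
    refine Nat.not_even_iff_odd.mpr hodd <| even_card_filter_eq_one_of_mulPolar_mul_left _ hH
      ?_ fun a a' c => mulPolar_sqForm_mul_left hU hu hu1 hcomm (hE _ a.2) (hE _ a'.2) (hE _ c.2)
    rw [hHcard, pow_add]
    exact dvd_mul_left _ _
  rw [hn]
  interval_cases n <;> simp

theorem isCyclic_of_card_le_two [Finite G] (hG : IsPGroup 2 G) (hE : ∀ a, a ∈ E ↔ a ^ 2 = 1)
    (h2 : Nat.card E ≤ 2) : IsCyclic G := by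
  classical
  have : Fintype (G ⧸ U) := Fintype.ofFinite _
  have : IsMulCommutative (G ⧸ U) := Subgroup.Normal.quotient_commutative_iff_commutator_le.mpr
    (commutator_le.mpr fun x _ y _ => hcomm x y)
  have : IsCyclic (G ⧸ U) := by
    refine isCyclic_of_card_sq_eq_one_le_two (hG.to_quotient U) ?_
    rwa [← Fintype.card_subtype, Fintype.card_congr (Equiv.subtypeEquivRight fun a => (hE a).symm),
      ← Nat.card_eq_fintype_card]
  obtain ⟨a, ha⟩ := Finset.card_pos.mp hodd.pos
  rw [Finset.mem_filter, sqForm_eq_one_iff] at ha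
  refine isCyclic_of_isCyclic_quotient_of_sq_eq hU hu hu1 (x := (a : G ⧸ U).out) ?_
  rw [← quotientSq_mk hU, QuotientGroup.out_eq', ha.2]

theorem not_comm_of_card_eq_four (hE : ∀ a ∈ E, a ^ 2 = 1) (h4 : Nat.card E = 4) :
    ¬ ∀ a b : G, a * b = b * a := by
  intro hab
  have : Fact (Nat.Prime 2) := ⟨Nat.prime_two⟩
  obtain ⟨r, hr⟩ := exists_prime_orderOf_dvd_card' (G := E) 2 (h4 ▸ (by norm_num : 2 ∣ 4))
  exact Nat.not_even_iff_odd.mpr hodd <| even_card_filter_eq_one_of_mulPolar_eq_zero _ hr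
    (fun a => mulPolar_sqForm_eq_zero_of_comm hU hu hu1 hcomm hab (hE _ a.2) (hE _ r.2))
    (h4 ▸ dvd_rfl)

theorem card_eq_eight_of_card_eq_four (hG : IsPGroup 2 G) (hE : ∀ a, a ∈ E ↔ a ^ 2 = 1)
    (h4 : Nat.card E = 4) : Nat.card G = 8 := by
  have hEtop : E = ⊤ := by
    refine (eq_top_iff' E).mpr fun a => (hE a).mpr ?_
    by_contra ha
    obtain ⟨w, hw⟩ := (hG.to_quotient U).exists_orderOf_eq_four ha
    have hw4 : (w ^ 2) ^ 2 = 1 := by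
      rw [← pow_mul, show 2 * 2 = 4 by rfl, ← hw, pow_orderOf_eq_one]
    have hr : orderOf (⟨w ^ 2, (hE _).mpr hw4⟩ : E) = 2 := by
      rw [Subgroup.orderOf_mk, orderOf_pow_of_dvd (by norm_num) (by rw [hw]; norm_num), hw]
    exact Nat.not_even_iff_odd.mpr hodd <| even_card_filter_eq_one_of_mulPolar_eq_zero _ hr
      (fun a => mulPolar_sqForm_sq_right hU hu hu1 hcomm ((hE _).mp a.2) hw4) (h4 ▸ dvd_rfl)
  rw [← U.card_mul_index, hU, index_eq_card, ← Subgroup.card_top (G := G ⧸ U), ← hEtop, h4]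

end QuotientSquare

theorem artin_stmt9_general {G : Type*} [Group G] [Finite G]
    (hG : IsPGroup 2 G)
    (U : Subgroup G) [U.Normal] (hU : Nat.card U = 2) (hcomm : commutator G ≤ U)
    (hodd : Odd (Nat.card {V : Subgroup G | IsCyclic ↥V ∧ U ≤ V ∧ U.relIndex V = 2})) :
    IsCyclic G ∨ (¬ (∀ a b : G, a * b = b * a) ∧ Nat.card G = 8) := by
  obtain ⟨u, hu, hu1⟩ : ∃ u ∈ U, u ≠ 1 := by
    obtain ⟨⟨u, hu⟩, hu1, -⟩ := (Nat.card_eq_two_iff' (1 : U)).mp hU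
    exact ⟨u, hu, by simpa using hu1⟩
  have hcomm' : ∀ x y : G, ⁅x, y⁆ ∈ U := fun x y =>
    hcomm (commutator_mem_commutator (mem_top x) (mem_top y))
  have : IsMulCommutative (G ⧸ U) :=
    Subgroup.Normal.quotient_commutative_iff_commutator_le.mpr hcomm
  let E := (powMonoidHom 2 : G ⧸ U →* G ⧸ U).ker
  have hE : ∀ a, a ∈ E ↔ a ^ 2 = 1 := fun a => Iff.rfl
  have : Fintype E := Fintype.ofFinite E
  have hoddE : Odd #{a : E | sqForm hU u a = 1} := by
    rwa [card_filter_sqForm_eq_one hU hu E hE, ← card_cyclic_eq_card_quotientSq_eq hU hu hu1]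
  rcases card_le_two_or_eq_four hU hu hu1 hcomm' E hoddE hG (fun a => (hE a).mp) with h2 | h4
  · exact .inl (isCyclic_of_card_le_two hU hu hu1 hcomm' E hoddE hG hE h2)
  · exact .inr ⟨not_comm_of_card_eq_four hU hu hu1 hcomm' E hoddE (fun a => (hE a).mp) h4,
      card_eq_eight_of_card_eq_four hU hu hu1 hcomm' E hoddE hG hE h4⟩

theorem artin_stmt9 {G : Type*} [Group G] [Finite G]
    (hG : IsPGroup 2 G) (hbig : 4 ∣ Nat.card G)
    (U : Subgroup G) [U.Normal] (hU : Nat.card U = 2) (hcomm : commutator G ≤ U)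
    (hodd : Odd (Nat.card {V : Subgroup G | IsCyclic ↥V ∧ U ≤ V ∧ U.relIndex V = 2})) :
    IsCyclic G ∨ (¬ (∀ a b : G, a * b = b * a) ∧ Nat.card G = 8) :=
  artin_stmt9_general hG U hU hcomm hodd
end

section
/- Let V be a finite group, U a cyclic normal subgroup with (V:U) = p^α, and suppose V = V_p × U_{p'} is the direct product of a Sylow p-subgroup V_p and the Hall p'-part U_{p'} of U. Then the number of cosets vU ∈ V/U such that ⟨v, U⟩ is cyclic equals the number of cosets wU_p ∈ V_p/U_p such that ⟨w, U_p⟩ is cyclic. -/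
/-!
Since `V = V_p U` and `U ∩ V_p = U_p` (Dedekind's modular law, using `V_p ∩ U_{p'} = 1`), the
inclusion `V_p → V` induces `V_p / U_p ≃ V / U`, and every coset of `U` has a representative
`w ∈ V_p`. For such `w`, `⟨U, w⟩ = ⟨U_p, w⟩ U_{p'}` where `⟨U_p, w⟩` is a `p`-group and `U_{p'}`
is a central cyclic `p'`-group; the product of commuting generators of coprime orders generates
both factors, so `⟨U, w⟩` is cyclic exactly when `⟨U_p, w⟩` is.
-/

open Subgroup

namespace Commute

variable {G : Type*} [Group G] {a b : G}

theorem mem_zpowers_mul_of_coprime (h : Commute a b) (hco : (orderOf a).Coprime (orderOf b)) :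
    a ∈ zpowers (a * b) := by
  obtain ⟨k, hk⟩ := exists_pow_eq_self_of_coprime hco.symm
  have hpow : (a * b) ^ orderOf b = a ^ orderOf b := by
    rw [h.mul_pow, pow_orderOf_eq_one, mul_one]
  simpa [hpow, hk] using pow_mem (pow_mem (mem_zpowers (a * b)) (orderOf b)) k

theorem zpowers_sup_zpowers_of_coprime (h : Commute a b)
    (hco : (orderOf a).Coprime (orderOf b)) : zpowers a ⊔ zpowers b = zpowers (a * b) := by
  refine le_antisymm (sup_le ?_ ?_) (zpowers_le.mpr (mul_mem_sup (mem_zpowers a) (mem_zpowers b)))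
  · exact zpowers_le.mpr (h.mem_zpowers_mul_of_coprime hco)
  · rw [zpowers_le, h.eq]
    exact h.symm.mem_zpowers_mul_of_coprime hco.symm

end Commute

namespace Subgroup

variable {G : Type*} [Group G]

theorem normal_of_le_center {H : Subgroup G} (h : H ≤ center G) : H.Normal :=
  ⟨fun n hn g => by rwa [mem_center_iff.mp (h hn) g, mul_inv_cancel_right]⟩

theorem sup_inf_eq_of_le {A B K : Subgroup G} [B.Normal] (hAK : A ≤ K) :
    (A ⊔ B) ⊓ K = A ⊔ B ⊓ K := by
  refine le_antisymm ?_ (sup_le (le_inf le_sup_left hAK) (inf_le_inf_right K le_sup_right))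
  rintro _ ⟨hx, hxK⟩
  obtain ⟨a, ha, b, hb, rfl⟩ := mem_sup_of_normal_right.mp hx
  have hbK : b ∈ K := by simpa using K.mul_mem (K.inv_mem (hAK ha)) hxK
  exact mul_mem_sup ha ⟨hb, hbK⟩

theorem sup_zpowers_mul_right {N : Subgroup G} {n : G} (hn : n ∈ N) (g : G) :
    N ⊔ zpowers (g * n) = N ⊔ zpowers g := by
  refine le_antisymm (sup_le le_sup_left ?_) (sup_le le_sup_left ?_) <;> rw [zpowers_le]
  · exact mul_mem (mem_sup_right (mem_zpowers g)) (mem_sup_left hn)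
  · simpa using mul_mem (mem_sup_right (mem_zpowers (g * n))) (mem_sup_left (N.inv_mem hn))

theorem isCyclic_sup_of_coprime {A B : Subgroup G} [IsCyclic A] [IsCyclic B]
    (hcomm : ∀ a ∈ A, ∀ b ∈ B, Commute a b) (hco : (Nat.card A).Coprime (Nat.card B)) :
    IsCyclic ↥(A ⊔ B) := by
  obtain ⟨a, rfl⟩ := A.isCyclic_iff_exists_zpowers_eq_top.mp ‹_›
  obtain ⟨b, rfl⟩ := B.isCyclic_iff_exists_zpowers_eq_top.mp ‹_›
  rw [Nat.card_zpowers, Nat.card_zpowers] at hco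
  rw [(hcomm a (mem_zpowers a) b (mem_zpowers b)).zpowers_sup_zpowers_of_coprime hco]
  infer_instance

theorem isCyclic_sup_iff_of_isPGroup [Finite G] {p : ℕ} [Fact p.Prime] {A B : Subgroup G}
    (hA : IsPGroup p A) [IsCyclic B] (hB : ¬ p ∣ Nat.card B) (hBZ : B ≤ center G) :
    IsCyclic ↥(A ⊔ B) ↔ IsCyclic A := by
  refine ⟨fun _ => isCyclic_of_le (H' := A ⊔ B) le_sup_left, fun _ => isCyclic_sup_of_coprime ?_ ?_⟩
  · exact fun a _ b hb => mem_center_iff.mp (hBZ hb) a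
  · obtain ⟨k, hk⟩ := IsPGroup.iff_card.mp hA
    rw [hk]
    exact ((Nat.Prime.coprime_iff_not_dvd Fact.out).mpr hB).pow_left k

theorem isCyclic_subgroupOf_sup_zpowers_iff {H K : Subgroup G} (w : K) :
    IsCyclic ↥(H.subgroupOf K ⊔ zpowers w) ↔ IsCyclic ↥(H ⊓ K ⊔ zpowers (w : G)) := by
  have hmap : (H.subgroupOf K ⊔ zpowers w).map K.subtype = H ⊓ K ⊔ zpowers (w : G) := by
    rw [map_sup, subgroupOf_map_subtype, MonoidHom.map_zpowers]
    rfl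
  rw [← hmap]
  exact (equivMapOfInjective _ _ K.subtype_injective).isCyclic

end Subgroup

theorem IsPGroup.le_sylow_of_le_center {G : Type*} [Group G] {p : ℕ} {P : Subgroup G}
    (hP : IsPGroup p P) (hPZ : P ≤ center G) (Q : Sylow p G) : P ≤ Q := by
  have := hP.inf_normalizer_sylow Q
  rwa [inf_eq_left.mpr (hPZ.trans (center_le_normalizer _)), eq_comm, inf_eq_left] at this

namespace QuotientGroup

variable {G : Type*} [Group G] {N : Subgroup G}

theorem exists_mk_eq_and_iff {P : G → Prop} (hP : ∀ g, ∀ n ∈ N, P (g * n) ↔ P g) (g₀ : G) :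
    (∃ g : G, (g : G ⧸ N) = g₀ ∧ P g) ↔ P g₀ := by
  refine ⟨fun ⟨g, hg, hPg⟩ => ?_, fun h => ⟨g₀, rfl, h⟩⟩
  have hn := QuotientGroup.eq.mp hg
  simpa using (hP g _ hn).mpr hPg

variable {H : Subgroup G} [N.Normal]

theorem ker_mk'_comp_subtype : ((mk' N).comp H.subtype).ker = N.subgroupOf H := by
  ext
  simp [mem_subgroupOf]

theorem mk'_comp_subtype_surjective (h : H ⊔ N = ⊤) :
    Function.Surjective ((mk' N).comp H.subtype) := by
  rintro ⟨g⟩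
  obtain ⟨x, hx, n, hn, rfl⟩ := mem_sup_of_normal_right.mp (h ▸ mem_top g)
  exact ⟨⟨x, hx⟩, QuotientGroup.eq.mpr (by simpa using hn)⟩

noncomputable def subgroupOfEquivOfSupEqTop (h : H ⊔ N = ⊤) : H ⧸ N.subgroupOf H ≃* G ⧸ N :=
  (quotientMulEquivOfEq ker_mk'_comp_subtype.symm).trans
    (quotientKerEquivOfSurjective _ (mk'_comp_subtype_surjective h))

@[simp]
theorem subgroupOfEquivOfSupEqTop_mk (h : H ⊔ N = ⊤) (x : H) :
    subgroupOfEquivOfSupEqTop h (x : H ⧸ N.subgroupOf H) = ((x : G) : G ⧸ N) :=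
  rfl

theorem card_setOf_exists_mk_eq_of_sup_eq_top (h : H ⊔ N = ⊤) {P : G → Prop}
    (hP : ∀ g, ∀ n ∈ N, P (g * n) ↔ P g) {Q : H → Prop} (hQ : ∀ x : H, Q x ↔ P x) :
    Nat.card {y : G ⧸ N | ∃ g : G, (g : G ⧸ N) = y ∧ P g} =
      Nat.card {y : H ⧸ N.subgroupOf H | ∃ x : H, (x : H ⧸ N.subgroupOf H) = y ∧ Q x} := by
  have hQ' : ∀ x : H, ∀ n ∈ N.subgroupOf H, Q (x * n) ↔ Q x := fun x n hn => by
    simpa only [hQ, coe_mul] using hP x n hn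
  refine (Nat.card_congr
    (Equiv.subtypeEquiv (subgroupOfEquivOfSupEqTop h).toEquiv fun y => ?_)).symm
  induction y using induction_on with
  | H x =>
    simp only [Set.mem_ofPred_eq, MulEquiv.toEquiv_eq_coe, MulEquiv.coe_toEquiv,
      subgroupOfEquivOfSupEqTop_mk]
    rw [exists_mk_eq_and_iff hQ', exists_mk_eq_and_iff hP, hQ]

end QuotientGroup

theorem artin_stmt13_general {V : Type*} [Group V] [Finite V] {p : ℕ}
    (hp : p.Prime) (U : Subgroup V) [U.Normal] (hUc : IsCyclic U)
    (Up Up' : Subgroup V) (hUpU : Up ≤ U) (hUp'U : Up' ≤ U)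
    (hUpP : IsPGroup p Up) (hUp'P : ¬ p ∣ Nat.card Up')
    (hsup : Up ⊔ Up' = U)
    (Vp : Sylow p V) (hZ : U ≤ Subgroup.center V)
    (hVsup : (Vp : Subgroup V) ⊔ Up' = ⊤) (hVinf : (Vp : Subgroup V) ⊓ Up' = ⊥) :
    Nat.card {x : V ⧸ U | ∃ v : V, QuotientGroup.mk v = x ∧
        IsCyclic ↥(U ⊔ Subgroup.zpowers v)} =
      Nat.card {y : ↥(Vp : Subgroup V) ⧸ (Up.subgroupOf (Vp : Subgroup V)) |
        ∃ w : ↥(Vp : Subgroup V), QuotientGroup.mk w = y ∧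
          IsCyclic ↥((Up.subgroupOf (Vp : Subgroup V)) ⊔ Subgroup.zpowers w)} := by
  have := Fact.mk hp
  have := isCyclic_of_le hUp'U
  have := normal_of_le_center (hUp'U.trans hZ)
  have hUpVp : Up ≤ Vp := hUpP.le_sylow_of_le_center (hUpU.trans hZ) Vp
  have hUVp : U ⊓ Vp = Up := by
    rw [← hsup, sup_inf_eq_of_le hUpVp, inf_comm, hVinf, sup_bot_eq]
  have hVU : (Vp : Subgroup V) ⊔ U = ⊤ := top_unique (hVsup ▸ sup_le_sup_left hUp'U _)
  have hcyc (w : V) (hw : w ∈ Vp) : IsCyclic ↥(Up ⊔ zpowers w) ↔ IsCyclic ↥(U ⊔ zpowers w) := by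
    have hA : IsPGroup p ↥(Up ⊔ zpowers w) :=
      Vp.isPGroup'.to_le (sup_le hUpVp (zpowers_le.mpr hw))
    rw [← hsup, sup_right_comm, isCyclic_sup_iff_of_isPGroup hA hUp'P (hUp'U.trans hZ)]
  have hsub : U.subgroupOf Vp = Up.subgroupOf Vp := by rw [← hUVp, inf_subgroupOf_right]
  rw [← hsub]
  exact QuotientGroup.card_setOf_exists_mk_eq_of_sup_eq_top hVU
    (P := fun v => IsCyclic ↥(U ⊔ zpowers v)) (fun g n hn => by rw [sup_zpowers_mul_right hn])
    fun w => by rw [isCyclic_subgroupOf_sup_zpowers_iff, hUVp, hcyc w w.2]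

theorem artin_stmt13 {V : Type*} [Group V] [Finite V] {p α : ℕ}
    (hp : p.Prime) (U : Subgroup V) [U.Normal] (hUc : IsCyclic U)
    (hidx : U.index = p ^ α)
    (Up Up' : Subgroup V) (hUpU : Up ≤ U) (hUp'U : Up' ≤ U)
    (hUpP : IsPGroup p Up) (hUp'P : ¬ p ∣ Nat.card Up')
    (hsup : Up ⊔ Up' = U) (hinf : Up ⊓ Up' = ⊥)
    (Vp : Sylow p V) (hZ : U ≤ Subgroup.center V)
    (hVsup : (Vp : Subgroup V) ⊔ Up' = ⊤) (hVinf : (Vp : Subgroup V) ⊓ Up' = ⊥) :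
    Nat.card {x : V ⧸ U | ∃ v : V, QuotientGroup.mk v = x ∧
        IsCyclic ↥(U ⊔ Subgroup.zpowers v)} =
      Nat.card {y : ↥(Vp : Subgroup V) ⧸ (Up.subgroupOf (Vp : Subgroup V)) |
        ∃ w : ↥(Vp : Subgroup V), QuotientGroup.mk w = y ∧
          IsCyclic ↥((Up.subgroupOf (Vp : Subgroup V)) ⊔ Subgroup.zpowers w)} :=
  artin_stmt13_general hp U hUc Up Up' hUpU hUp'U hUpP hUp'P hsup Vp hZ hVsup hVinf
end
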